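/- arXiv:1810.02231 — 4 statements merged into one kernel-verified Lean document; each statement's English description precedes it below -/
import Mathlib

section
/- The angle ∠(x,s,y) at the center of a disc of radius s between the centers of two discs of radii x and y (all three pairwise externally tangent) is strictly decreasing in s for fixed x, y, in the following precise sense: for fixed x, y > 0, the function s ↦ arccos(((x+s)^2 + (y+s)^2 - (x+y)^2)/(2(x+s)(y+s))) is strictly decreasing on (0, ∞). -/
theorem stmt_8 (x y : ℝ) (hx : 0 < x) (hy : 0 < y) :
    StrictAntiOn
      (fun s : ℝ => Real.arccos (((x+s)^2 + (y+s)^2 - (x+y)^2) / (2*(x+s)*(y+s))))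
      (Set.Ioi 0) := by
  have key : ∀ s : ℝ, 0 < s →
      ((x+s)^2 + (y+s)^2 - (x+y)^2) / (2*(x+s)*(y+s)) = 1 - 2*x*y/((x+s)*(y+s)) := by
    intro s hs
    have h1 : (x+s) ≠ 0 := by positivity
    have h2 : (y+s) ≠ 0 := by positivity
    field_simp
    ring
  have mem : ∀ s : ℝ, 0 < s →
      ((x+s)^2 + (y+s)^2 - (x+y)^2) / (2*(x+s)*(y+s)) ∈ Set.Icc (-1 : ℝ) 1 := by
    intro s hs
    rw [key s hs]
    have hD : 0 < (x+s)*(y+s) := by positivity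
    constructor
    · have h : 2*x*y/((x+s)*(y+s)) ≤ 2 := by
        rw [div_le_iff₀ hD]; nlinarith
      linarith
    · have : 0 ≤ 2*x*y/((x+s)*(y+s)) := by positivity
      linarith
  intro a ha b hb hab
  simp only [Set.mem_Ioi] at ha hb
  have hfa := mem a ha
  have hfb := mem b hb
  apply Real.strictAntiOn_arccos hfa hfb
  rw [key a ha, key b hb]
  have hDa : 0 < (x+a)*(y+a) := by positivity
  have hDb : 0 < (x+b)*(y+b) := by positivity
  have : 2*x*y/((x+b)*(y+b)) < 2*x*y/((x+a)*(y+a)) := by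
    apply div_lt_div_of_pos_left (by positivity) hDa
    nlinarith
  linarith
end

section
/- Let k = (k1,...,k6) ∈ ℕ^6 be the angle vector of a small corona in a compact packing with disc sizes 0 < s < r < 1, i.e., k1·∠(1,s,1) + k2·∠(1,s,r) + k3·∠(1,s,s) + k4·∠(r,s,r) + k5·∠(r,s,s) + k6·∠(s,s,s) = 2π. Then, unless the corona is ssssss, we have k1+k2+k3+k4+k5+k6 < 6 and 3k1 + 3k2 + (3/2)k3 + 3k4 + (3/2)k5 + k6 > 6. -/
/-- The angle at the center of the disc of radius `c` in the triangle of centers of three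
pairwise externally tangent discs of radii `x`, `c`, `y` (law of cosines). -/
noncomputable def contactAngle (x c y : ℝ) : ℝ :=
  Real.arccos (((x+c)^2 + (y+c)^2 - (x+y)^2) / (2*(x+c)*(y+c)))

/-!
Every contact angle at the small disc lies strictly between `π/3` and `π`, and strictly below
`π/2` when the other two discs include a small one; only `∠(s,s,s)` equals `π/3`. Unless the
corona is `ssssss`, some angle other than `∠(s,s,s)` occurs, so replacing every angle by `π/3`
(resp. by its upper bound) strictly decreases (resp. increases) the total `2π`; dividing by
`π/3` gives the two inequalities.
-/

open Real Finset

section ContactAngle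

variable {x c y : ℝ}

theorem contactAngle_eq_arccos (hx : 0 < x) (hc : 0 < c) (hy : 0 < y) :
    contactAngle x c y = arccos (1 - 2 * x * y / ((x + c) * (y + c))) := by
  unfold contactAngle
  congr 1
  field_simp
  ring

theorem neg_one_lt_one_sub_div (hx : 0 < x) (hc : 0 < c) (hy : 0 < y) :
    -1 < 1 - 2 * x * y / ((x + c) * (y + c)) := by
  have : 2 * x * y / ((x + c) * (y + c)) < 2 := by
    rw [div_lt_iff₀ (by positivity)]
    nlinarith [mul_pos hx hc, mul_pos hc hy]
  linarith

theorem contactAngle_lt_pi (hx : 0 < x) (hc : 0 < c) (hy : 0 < y) :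
    contactAngle x c y < π := by
  rw [contactAngle_eq_arccos hx hc hy]
  refine (arccos_le_pi _).lt_of_ne fun h => ?_
  linarith [arccos_eq_pi.mp h, neg_one_lt_one_sub_div hx hc hy]

theorem contactAngle_lt_pi_div_two (hx : 0 < x) (hc : 0 < c) :
    contactAngle x c c < π / 2 := by
  rw [contactAngle_eq_arccos hx hc hc, arccos_lt_pi_div_two, sub_pos,
    div_lt_one (by positivity)]
  nlinarith [mul_pos hx hc, mul_pos hc hc]

theorem pi_div_three_lt_contactAngle (hc : 0 < c) (hcx : c < x) (hcy : c ≤ y) :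
    π / 3 < contactAngle x c y := by
  have hx : 0 < x := hc.trans hcx
  have hy : 0 < y := hc.trans_le hcy
  have harccos : arccos (1 / 2) = π / 3 :=
    arccos_eq_of_eq_cos (by positivity) (by linarith [pi_pos]) cos_pi_div_three.symm
  have hlt : 1 - 2 * x * y / ((x + c) * (y + c)) < 1 / 2 := by
    rw [sub_lt_comm, lt_div_iff₀ (by positivity)]
    nlinarith [mul_nonneg (sub_pos.2 hcx).le (sub_nonneg.2 hcy), mul_pos hx hy]
  rw [contactAngle_eq_arccos hx hc hy, ← harccos]
  exact arccos_lt_arccos (neg_one_lt_one_sub_div hx hc hy).le hlt (by norm_num)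

theorem contactAngle_self (hc : c ≠ 0) : contactAngle c c c = π / 3 := by
  have hcos : ((c + c) ^ 2 + (c + c) ^ 2 - (c + c) ^ 2) / (2 * (c + c) * (c + c)) = 1 / 2 := by
    field_simp
    ring
  rw [contactAngle, hcos]
  exact arccos_eq_of_eq_cos (by positivity) (by linarith [pi_pos]) cos_pi_div_three.symm

end ContactAngle

theorem Finset.sum_natCast_mul_lt_sum_natCast_mul {ι : Type*} {s : Finset ι} {k : ι → ℕ}
    {f g : ι → ℝ} (hle : ∀ i ∈ s, f i ≤ g i) (hlt : ∃ i ∈ s, k i ≠ 0 ∧ f i < g i) :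
    ∑ i ∈ s, k i * f i < ∑ i ∈ s, k i * g i := by
  obtain ⟨i, hi, hki, hfg⟩ := hlt
  exact sum_lt_sum (fun j hj => mul_le_mul_of_nonneg_left (hle j hj) (Nat.cast_nonneg _))
    ⟨i, hi, mul_lt_mul_of_pos_left hfg (by positivity)⟩

theorem exists_ne_ne_zero_of_sum_eq_two_pi {ι : Type*} {s : Finset ι} {k : ι → ℕ} {θ : ι → ℝ}
    {j : ι} (hj : j ∈ s) (hθj : θ j = π / 3) (hsum : ∑ i ∈ s, k i * θ i = 2 * π)
    (hne : ¬ ((∀ i ∈ s, i ≠ j → k i = 0) ∧ k j = 6)) :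
    ∃ i ∈ s, i ≠ j ∧ k i ≠ 0 := by
  by_contra! hzero
  refine hne ⟨hzero, ?_⟩
  rw [sum_eq_single_of_mem j hj fun i hi hij => by simp [hzero i hi hij], hθj,
    show 2 * π = 6 * (π / 3) by ring] at hsum
  exact_mod_cast mul_right_cancel₀ (by positivity) hsum

theorem sum_lt_six_and_six_lt_sum_of_sum_eq_two_pi {ι : Type*} {s : Finset ι} {k : ι → ℕ}
    {θ w : ι → ℝ} {j : ι} (hθj : θ j = π / 3) (hwj : w j = 1)
    (hθ : ∀ i ∈ s, i ≠ j → θ i ∈ Set.Ioo (π / 3) (w i * (π / 3)))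
    (hk : ∃ i ∈ s, i ≠ j ∧ k i ≠ 0) (hsum : ∑ i ∈ s, k i * θ i = 2 * π) :
    ∑ i ∈ s, (k i : ℝ) < 6 ∧ 6 < ∑ i ∈ s, k i * w i := by
  have hbounds : ∀ i ∈ s, θ i ∈ Set.Icc (π / 3) (w i * (π / 3)) := fun i hi => by
    by_cases hij : i = j
    · subst hij
      simp [hθj, hwj]
    · exact Set.Ioo_subset_Icc_self (hθ i hi hij)
  obtain ⟨i, hi, hij, hki⟩ := hk
  have hlower := sum_natCast_mul_lt_sum_natCast_mul (fun i hi => (hbounds i hi).1)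
    ⟨i, hi, hki, (hθ i hi hij).1⟩
  have hupper := sum_natCast_mul_lt_sum_natCast_mul (fun i hi => (hbounds i hi).2)
    ⟨i, hi, hki, (hθ i hi hij).2⟩
  simp_rw [← mul_assoc] at hupper
  rw [← sum_mul, hsum, show 2 * π = 6 * (π / 3) by ring] at hlower hupper
  exact ⟨lt_of_mul_lt_mul_right hlower (by positivity),
    lt_of_mul_lt_mul_right hupper (by positivity)⟩

noncomputable def smallCoronaAngle (r s : ℝ) : Fin 6 → ℝ :=
  ![contactAngle 1 s 1, contactAngle 1 s r, contactAngle 1 s s,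
    contactAngle r s r, contactAngle r s s, contactAngle s s s]

noncomputable def smallCoronaAngleBound : Fin 6 → ℝ := ![3, 3, 3 / 2, 3, 3 / 2, 1]

theorem smallCoronaAngle_five {r s : ℝ} (hs : s ≠ 0) : smallCoronaAngle r s 5 = π / 3 :=
  contactAngle_self hs

theorem smallCoronaAngle_mem_Ioo {r s : ℝ} (hs : 0 < s) (hsr : s < r) (hr : r < 1) {i : Fin 6}
    (hi : i ≠ 5) : smallCoronaAngle r s i ∈ Set.Ioo (π / 3) (smallCoronaAngleBound i * (π / 3)) := by
  have hr0 : 0 < r := hs.trans hsr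
  have hs1 : s < 1 := hsr.trans hr
  fin_cases i <;>
    simp only [Fin.zero_eta, Fin.mk_one, Fin.reduceFinMk, Fin.isValue, Matrix.cons_val_zero,
      Matrix.cons_val_one, Matrix.cons_val, smallCoronaAngle, smallCoronaAngleBound, Set.mem_Ioo]
  · exact ⟨pi_div_three_lt_contactAngle hs hs1 hs1.le,
      by linarith [contactAngle_lt_pi one_pos hs one_pos]⟩
  · exact ⟨pi_div_three_lt_contactAngle hs hs1 hsr.le,
      by linarith [contactAngle_lt_pi one_pos hs hr0]⟩
  · exact ⟨pi_div_three_lt_contactAngle hs hs1 le_rfl,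
      by linarith [contactAngle_lt_pi_div_two one_pos hs]⟩
  · exact ⟨pi_div_three_lt_contactAngle hs hsr hsr.le,
      by linarith [contactAngle_lt_pi hr0 hs hr0]⟩
  · exact ⟨pi_div_three_lt_contactAngle hs hsr le_rfl,
      by linarith [contactAngle_lt_pi_div_two hr0 hs]⟩
  · exact absurd rfl hi

theorem stmt_11 (r s : ℝ) (hs : 0 < s) (hsr : s < r) (hr : r < 1)
    (k1 k2 k3 k4 k5 k6 : ℕ)
    (hsum : (k1:ℝ) * contactAngle 1 s 1 + k2 * contactAngle 1 s r +
      k3 * contactAngle 1 s s + k4 * contactAngle r s r +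
      k5 * contactAngle r s s + k6 * contactAngle s s s = 2 * Real.pi)
    (hne : ¬ (k1 = 0 ∧ k2 = 0 ∧ k3 = 0 ∧ k4 = 0 ∧ k5 = 0 ∧ k6 = 6)) :
    (k1 : ℝ) + k2 + k3 + k4 + k5 + k6 < 6 ∧
    3*(k1:ℝ) + 3*k2 + (3/2)*k3 + 3*k4 + (3/2)*k5 + k6 > 6 := by
  let k : Fin 6 → ℕ := ![k1, k2, k3, k4, k5, k6]
  have hsum' : ∑ i, k i * smallCoronaAngle r s i = 2 * π := by
    simpa [Fin.sum_univ_six, k, smallCoronaAngle] using hsum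
  have hk := exists_ne_ne_zero_of_sum_eq_two_pi (mem_univ 5) (smallCoronaAngle_five hs.ne')
    hsum' fun ⟨hzero, h6⟩ => hne ⟨hzero 0 (mem_univ _) (by decide),
      hzero 1 (mem_univ _) (by decide), hzero 2 (mem_univ _) (by decide),
      hzero 3 (mem_univ _) (by decide), hzero 4 (mem_univ _) (by decide), h6⟩
  obtain ⟨hcount, hweight⟩ := sum_lt_six_and_six_lt_sum_of_sum_eq_two_pi
    (smallCoronaAngle_five hs.ne') rfl (fun i _ => smallCoronaAngle_mem_Ioo hs hsr hr) hk hsum'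
  simp only [Fin.sum_univ_six, Fin.isValue, Matrix.cons_val_zero, Matrix.cons_val_one,
    Matrix.cons_val, mul_one, k, smallCoronaAngleBound] at hcount hweight
  exact ⟨hcount, by linarith⟩
end

section
/- If a disc of radius s is surrounded by a corona consisting entirely of n mutually consecutive tangent discs of radius r (r > s), then n·arccos(1 - 2r^2/(r+s)^2) = 2π; consequently, for the corona of five r-discs (n=5), the ratio t = s/r satisfies 5t^4 + 20t^3 + 10t^2 - 20t + 1 = 0. -/
/-!
Seen from the centre of the `s`-disc, two tangent `r`-discs of the corona have centres at angular
distance `α = 2 arcsin (r / (r + s)) = arccos (1 - 2r² / (r + s)²)` or `2π - α`. All centres lie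
within one turn, so none of the `n - 1` gaps between angularly consecutive centres can be
`2π - α` (with the other `n - 2 ≥ 1` gaps of size at least `α` they would exceed `2π`); hence
they are all `α`, and the tangency closing the ring forces `(n - 1) α = 2π - α`. For `n = 5`
this says `sin (π / 5) = r / (r + s)`, and `cos (π / 5) = (1 + √5) / 4` turns it into the
quartic for `s / r`.
-/

open Real Finset

theorem Fin.sum_univ_succ_sub_castSucc {M : Type*} [AddCommGroup M] :
    ∀ {m : ℕ} (f : Fin (m + 1) → M), ∑ i : Fin m, (f i.succ - f i.castSucc) = f (last m) - f 0
  | 0, _ => by simp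
  | m + 1, f => by
    rw [Fin.sum_univ_castSucc]
    simp only [Fin.succ_castSucc]
    rw [Fin.sum_univ_succ_sub_castSucc (fun i ↦ f i.castSucc)]
    simp only [Fin.succ_last, Fin.castSucc_zero]
    abel

/-- A single term equal to `b` would push the sum up to `(#s - 1) * a + b`. -/
theorem Finset.sum_eq_card_mul_of_forall_eq_or_eq {ι : Type*} {s : Finset ι} {d : ι → ℝ}
    {a b : ℝ} (hab : a ≤ b) (hd : ∀ k ∈ s, d k = a ∨ d k = b)
    (hlt : ∑ k ∈ s, d k + a < #s * a + b) : ∑ k ∈ s, d k = #s * a := by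
  have hall : ∀ k ∈ s, d k = a := by
    intro k hk
    by_contra hne
    have hexcess : b - a ≤ ∑ j ∈ s, (d j - a) := by
      refine (hd k hk).resolve_left hne ▸ single_le_sum (f := fun j ↦ d j - a) ?_ hk
      intro j hj
      rcases hd j hj with h | h <;> linarith
    rw [sum_sub_distrib, sum_const, nsmul_eq_mul] at hexcess
    linarith
  rw [sum_congr rfl hall, sum_const, nsmul_eq_mul]

theorem Real.arccos_one_sub_two_mul_sq {x : ℝ} (hx₀ : 0 ≤ x) (hx₁ : x ≤ 1) :
    arccos (1 - 2 * x ^ 2) = 2 * arcsin x := by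
  have hcos : cos (2 * arcsin x) = 1 - 2 * x ^ 2 := by
    rw [cos_two_mul, cos_sq', sin_arcsin (by linarith) hx₁]; ring
  rw [← hcos, arccos_cos (by linarith [arcsin_nonneg.2 hx₀]) (by linarith [arcsin_le_pi_div_two x])]

theorem Real.eq_arcsin_or_eq_pi_sub_arcsin {t y : ℝ} (ht₀ : 0 ≤ t) (htπ : t ≤ π)
    (h : sin t = y) : t = arcsin y ∨ t = π - arcsin y := by
  rcases le_total t (π / 2) with ht | ht
  · exact .inl (h ▸ (arcsin_sin (by linarith [pi_pos]) ht).symm)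
  · right
    have := arcsin_sin (x := π - t) (by linarith [pi_pos]) (by linarith)
    rw [sin_pi_sub, h] at this
    linarith

theorem Real.eq_or_eq_two_pi_sub_of_abs_sin_half_eq {x y : ℝ} (hx₀ : 0 ≤ x) (hx : x ≤ 2 * π)
    (h : |sin (x / 2)| = y) : x = 2 * arcsin y ∨ x = 2 * π - 2 * arcsin y := by
  rw [abs_of_nonneg (sin_nonneg_of_nonneg_of_le_pi (by linarith) (by linarith))] at h
  rcases eq_arcsin_or_eq_pi_sub_arcsin (by linarith) (by linarith) h with h | h
  · exact .inl (by linarith)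
  · exact .inr (by linarith)

theorem EuclideanSpace.dist_cos_sin (a b : ℝ) :
    dist ((EuclideanSpace.equiv (Fin 2) ℝ).symm ![cos a, sin a])
      ((EuclideanSpace.equiv (Fin 2) ℝ).symm ![cos b, sin b]) = 2 * |sin ((a - b) / 2)| := by
  have hhalf : sin ((a - b) / 2) ^ 2 = (1 - cos (a - b)) / 2 := by
    rw [sin_sq_eq_half_sub, mul_div_cancel₀ _ two_ne_zero]; ring
  rw [EuclideanSpace.dist_eq, ← sqrt_sq (by positivity : 0 ≤ 2 * |sin ((a - b) / 2)|)]
  congr 1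
  simp only [PiLp.continuousLinearEquiv_symm_apply, Real.dist_eq, sq_abs, Fin.sum_univ_two,
    Matrix.cons_val_zero, Matrix.cons_val_one, Matrix.cons_val_fin_one, mul_pow, hhalf, cos_sub]
  nlinarith [sin_sq_add_cos_sq a, sin_sq_add_cos_sq b]

theorem EuclideanSpace.dist_add_smul_cos_sin (p : EuclideanSpace ℝ (Fin 2)) (R a b : ℝ) :
    dist (p + R • (EuclideanSpace.equiv (Fin 2) ℝ).symm ![cos a, sin a])
      (p + R • (EuclideanSpace.equiv (Fin 2) ℝ).symm ![cos b, sin b]) =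
      2 * |R| * |sin ((a - b) / 2)| := by
  rw [dist_add_left, dist_smul₀, dist_cos_sin, Real.norm_eq_abs]
  ring

theorem quartic_eq_zero_of_sin_pi_div_five_sq_mul {t : ℝ}
    (h : sin (π / 5) ^ 2 * (1 + t) ^ 2 = 1) :
    5 * t ^ 4 + 20 * t ^ 3 + 10 * t ^ 2 - 20 * t + 1 = 0 := by
  have hsin : sin (π / 5) ^ 2 = (5 - √5) / 8 := by
    rw [sin_sq, cos_pi_div_five]; ring_nf; rw [sq_sqrt (by norm_num)]; ring
  have h5 : √5 ^ 2 = 5 := sq_sqrt (by norm_num)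
  set u := (1 + t) ^ 2 with hu
  have hlin : √5 * u = 5 * u - 8 := by rw [hsin] at h; linarith
  have hquad : 5 * u ^ 2 - 20 * u + 16 = 0 := by
    linear_combination (-(√5 * u) - (5 * u - 8)) * hlin / 4 + u ^ 2 * h5 / 4
  rw [hu] at hquad
  linear_combination hquad

theorem stmt_13_general (r s : ℝ) (hs : 0 < s) (hsr : s < r) (n : ℕ) (hn : 3 ≤ n)
    (p : EuclideanSpace ℝ (Fin 2)) (c : Fin n → EuclideanSpace ℝ (Fin 2)) (θ : Fin n → ℝ)
    (hpos : ∀ i, c i = p + (s+r) • (EuclideanSpace.equiv (Fin 2) ℝ).symm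
      ![Real.cos (θ i), Real.sin (θ i)])
    (hmono : StrictMono θ)
    (hwindow : ∀ i j : Fin n, θ i < θ j + 2 * Real.pi)
    (htan : ∀ i : Fin n, dist (c i) (c ⟨(i.val + 1) % n, Nat.mod_lt _ i.pos⟩) = 2*r) :
    (n : ℝ) * Real.arccos (1 - 2*r^2/(r+s)^2) = 2 * Real.pi ∧
    (n = 5 → 5*(s/r)^4 + 20*(s/r)^3 + 10*(s/r)^2 - 20*(s/r) + 1 = 0) := by
  have hr : 0 < r := hs.trans hsr
  set y := r / (r + s) with hy
  have hy₀ : 0 < y := by positivity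
  have hy₁ : y < 1 := (div_lt_one (by linarith)).2 (by linarith)
  have hα : arccos (1 - 2 * r ^ 2 / (r + s) ^ 2) = 2 * arcsin y := by
    rw [← arccos_one_sub_two_mul_sq hy₀.le hy₁.le, hy, div_pow, mul_div_assoc]
  have hβ₀ : 0 < arcsin y := arcsin_pos.2 hy₀
  have hβ₁ : arcsin y < π / 2 := arcsin_lt_pi_div_two.2 hy₁
  have hgap : ∀ i j, θ i < θ j → dist (c i) (c j) = 2 * r →
      θ j - θ i = 2 * arcsin y ∨ θ j - θ i = 2 * π - 2 * arcsin y := by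
    intro i j hij hd
    rw [hpos, hpos, EuclideanSpace.dist_add_smul_cos_sin, abs_of_pos (by linarith : 0 < s + r), ← abs_neg,
      ← sin_neg, ← neg_div, neg_sub] at hd
    refine eq_or_eq_two_pi_sub_of_abs_sin_half_eq (by linarith) (by linarith [hwindow j i]) ?_
    rw [hy, eq_div_iff (by linarith)]
    linarith
  obtain ⟨m, rfl⟩ : ∃ m, n = m + 1 := ⟨n - 1, by omega⟩
  have hm : (2 : ℝ) ≤ m := by exact_mod_cast (by omega : 2 ≤ m)
  have hstep (k : Fin m) : θ k.succ - θ k.castSucc = 2 * arcsin y ∨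
      θ k.succ - θ k.castSucc = 2 * π - 2 * arcsin y := by
    have hnext : (⟨(k.castSucc.val + 1) % (m + 1), Nat.mod_lt _ m.succ_pos⟩ : Fin (m + 1)) =
        k.succ :=
      Fin.ext (Nat.mod_eq_of_lt (by simp))
    exact hgap _ _ (hmono k.castSucc_lt_succ) (by rw [← htan k.castSucc, hnext])
  have hsum : ∑ k : Fin m, (θ k.succ - θ k.castSucc) = m * (2 * arcsin y) := by
    have hspan : θ (Fin.last m) - θ 0 < 2 * π := by linarith [hwindow (Fin.last m) 0]
    have h := sum_eq_card_mul_of_forall_eq_or_eq (s := univ) (by linarith)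
      (fun k _ ↦ hstep k) (by rw [Fin.sum_univ_succ_sub_castSucc, card_fin]; nlinarith)
    rwa [card_fin] at h
  have : NeZero m := ⟨by omega⟩
  have hwrap : (⟨(m + 1) % (m + 1), Nat.mod_lt _ m.succ_pos⟩ : Fin (m + 1)) = 0 :=
    Fin.ext (Nat.mod_self _)
  have hclose := hgap 0 (Fin.last m) (hmono Fin.last_pos') <| by
    rw [dist_comm, ← htan (Fin.last m)]
    simp only [Fin.val_last, hwrap]
  rw [← Fin.sum_univ_succ_sub_castSucc, hsum] at hclose
  have hcount : ((m + 1 : ℕ) : ℝ) * (2 * arcsin y) = 2 * π := by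
    push_cast
    rcases hclose with hshort | hlong
    · nlinarith
    · linarith
  refine ⟨hα ▸ hcount, fun h5 ↦ ?_⟩
  have hβ : arcsin y = π / 5 := by
    rw [h5] at hcount
    norm_num at hcount
    linarith
  apply quartic_eq_zero_of_sin_pi_div_five_sq_mul
  rw [← hβ, sin_arcsin (by linarith) hy₁.le, hy]
  field_simp

/-- If a disc of radius `s` is surrounded by a corona of `n` consecutively tangent discs of
radius `r` (placed at strictly increasing angles within one turn around the central disc, no
two of them overlapping), then `n · arccos(1 - 2r²/(r+s)²) = 2π`; consequently for `n = 5`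
the ratio `t = s/r` satisfies `5t⁴ + 20t³ + 10t² - 20t + 1 = 0`. -/
theorem stmt_13 (r s : ℝ) (hs : 0 < s) (hsr : s < r) (n : ℕ) (hn : 3 ≤ n)
    (p : EuclideanSpace ℝ (Fin 2)) (c : Fin n → EuclideanSpace ℝ (Fin 2)) (θ : Fin n → ℝ)
    (hpos : ∀ i, c i = p + (s+r) • (EuclideanSpace.equiv (Fin 2) ℝ).symm
      ![Real.cos (θ i), Real.sin (θ i)])
    (hmono : StrictMono θ)
    (hwindow : ∀ i j : Fin n, θ i < θ j + 2 * Real.pi)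
    (htan : ∀ i : Fin n, dist (c i) (c ⟨(i.val + 1) % n, Nat.mod_lt _ i.pos⟩) = 2*r)
    (hsep : ∀ i j : Fin n, i ≠ j → 2*r ≤ dist (c i) (c j)) :
    (n : ℝ) * Real.arccos (1 - 2*r^2/(r+s)^2) = 2 * Real.pi ∧
    (n = 5 → 5*(s/r)^4 + 20*(s/r)^3 + 10*(s/r)^2 - 20*(s/r) + 1 = 0) :=
  stmt_13_general r s hs hsr n hn p c θ hpos hmono hwindow htan
end

section
/- Let l = (l1,...,l6) ∈ ℕ^6 be the angle vector of a medium corona in a compact packing with sizes 0 < s < r < 1, i.e., l1·∠(1,r,1) + l2·∠(1,r,r) + l3·∠(1,r,s) + l4·∠(r,r,r) + l5·∠(r,r,s) + l6·∠(s,r,s) = 2π. Then, unless the corona is rrrrrr, 3l1 + (3/2)l2 + (3/2)l3 + l4 + l5 + l6 > 6. -/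
lemma arccos_lt_pi' {x : ℝ} (h : -1 < x) : Real.arccos x < Real.pi :=
  lt_of_le_of_ne (Real.arccos_le_pi x) (by rw [Ne, Real.arccos_eq_pi]; linarith)

lemma arccos_lt_pi_div_three {x : ℝ} (h : 1/2 < x) (h1 : x ≤ 1) :
    Real.arccos x < Real.pi / 3 := by
  have h3 : Real.arccos (1/2) = Real.pi / 3 :=
    Real.arccos_eq_of_eq_cos (by positivity) (by linarith [Real.pi_pos])
      Real.cos_pi_div_three.symm
  rw [← h3]
  exact Real.strictAntiOn_arccos (by constructor <;> linarith) ⟨by linarith, h1⟩ h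

set_option maxHeartbeats 1000000 in
theorem stmt_17 (r s : ℝ) (hs : 0 < s) (hsr : s < r) (hr : r < 1)
    (l1 l2 l3 l4 l5 l6 : ℕ)
    (hsum : (l1:ℝ) * contactAngle 1 r 1 + l2 * contactAngle 1 r r +
      l3 * contactAngle 1 r s + l4 * contactAngle r r r +
      l5 * contactAngle r r s + l6 * contactAngle s r s = 2 * Real.pi)
    (hne : ¬ (l1 = 0 ∧ l2 = 0 ∧ l3 = 0 ∧ l4 = 6 ∧ l5 = 0 ∧ l6 = 0)) :
    3*(l1:ℝ) + (3/2)*l2 + (3/2)*l3 + l4 + l5 + l6 > 6 := by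
  have hr0 : 0 < r := hs.trans hsr
  have hpi := Real.pi_pos
  -- angle bounds
  have hA1 : contactAngle 1 r 1 < Real.pi := by
    apply arccos_lt_pi'
    rw [lt_div_iff₀ (by positivity)]
    nlinarith
  have hA2 : contactAngle 1 r r < Real.pi / 2 := by
    apply Real.arccos_lt_pi_div_two.mpr
    apply div_pos (by nlinarith) (by positivity)
  have hA3 : contactAngle 1 r s < Real.pi / 2 := by
    apply Real.arccos_lt_pi_div_two.mpr
    apply div_pos (by nlinarith) (by positivity)
  have hA4 : contactAngle r r r = Real.pi / 3 := by
    unfold contactAngle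
    have : ((r+r)^2 + (r+r)^2 - (r+r)^2) / (2*(r+r)*(r+r)) = 1/2 := by
      field_simp; ring
    rw [this]
    exact Real.arccos_eq_of_eq_cos (by positivity) (by linarith)
      Real.cos_pi_div_three.symm
  have hA5 : contactAngle r r s < Real.pi / 3 := by
    apply arccos_lt_pi_div_three
    · rw [lt_div_iff₀ (by positivity)]; nlinarith
    · rw [div_le_one (by positivity)]; nlinarith
  have hA6 : contactAngle s r s < Real.pi / 3 := by
    apply arccos_lt_pi_div_three
    · rw [lt_div_iff₀ (by positivity)]; nlinarith
    · rw [div_le_one (by positivity)]; nlinarith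
  have hN1 : (0:ℝ) ≤ contactAngle 1 r 1 := Real.arccos_nonneg _
  have hN2 : (0:ℝ) ≤ contactAngle 1 r r := Real.arccos_nonneg _
  have hN3 : (0:ℝ) ≤ contactAngle 1 r s := Real.arccos_nonneg _
  have hN5 : (0:ℝ) ≤ contactAngle r r s := Real.arccos_nonneg _
  have hN6 : (0:ℝ) ≤ contactAngle s r s := Real.arccos_nonneg _
  have T1 : (l1:ℝ) * contactAngle 1 r 1 ≤ l1 * Real.pi :=
    mul_le_mul_of_nonneg_left hA1.le (Nat.cast_nonneg _)
  have T2 : (l2:ℝ) * contactAngle 1 r r ≤ l2 * (Real.pi/2) :=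
    mul_le_mul_of_nonneg_left hA2.le (Nat.cast_nonneg _)
  have T3 : (l3:ℝ) * contactAngle 1 r s ≤ l3 * (Real.pi/2) :=
    mul_le_mul_of_nonneg_left hA3.le (Nat.cast_nonneg _)
  have T5 : (l5:ℝ) * contactAngle r r s ≤ l5 * (Real.pi/3) :=
    mul_le_mul_of_nonneg_left hA5.le (Nat.cast_nonneg _)
  have T6 : (l6:ℝ) * contactAngle s r s ≤ l6 * (Real.pi/3) :=
    mul_le_mul_of_nonneg_left hA6.le (Nat.cast_nonneg _)
  rw [hA4] at hsum
  by_cases hz : l1 = 0 ∧ l2 = 0 ∧ l3 = 0 ∧ l5 = 0 ∧ l6 = 0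
  · obtain ⟨e1, e2, e3, e5, e6⟩ := hz
    subst e1; subst e2; subst e3; subst e5; subst e6
    push_cast at hsum ⊢
    have h4 : (l4:ℝ) = 6 := by
      have : (l4:ℝ) * (Real.pi/3) = 6 * (Real.pi/3) := by linarith
      exact mul_right_cancel₀ (by positivity) this
    exfalso
    exact hne ⟨rfl, rfl, rfl, by exact_mod_cast h4, rfl, rfl⟩
  · -- strict inequality: sum < bound sum
    have key : 2 * Real.pi <
        (l1:ℝ) * Real.pi + l2 * (Real.pi/2) + l3 * (Real.pi/2)
          + l4 * (Real.pi/3) + l5 * (Real.pi/3) + l6 * (Real.pi/3) := by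
      have hd : l1 ≠ 0 ∨ l2 ≠ 0 ∨ l3 ≠ 0 ∨ l5 ≠ 0 ∨ l6 ≠ 0 := by
        by_contra h; push_neg at h; exact hz ⟨h.1, h.2.1, h.2.2.1, h.2.2.2.1, h.2.2.2.2⟩
      rcases hd with h | h | h | h | h
      · have h1 : (1:ℝ) ≤ (l1:ℝ) := by exact_mod_cast Nat.one_le_iff_ne_zero.mpr h
        have S : (l1:ℝ) * contactAngle 1 r 1 < l1 * Real.pi :=
          mul_lt_mul_of_pos_left hA1 (by linarith)
        linarith
      · have h1 : (1:ℝ) ≤ (l2:ℝ) := by exact_mod_cast Nat.one_le_iff_ne_zero.mpr h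
        have S : (l2:ℝ) * contactAngle 1 r r < l2 * (Real.pi/2) :=
          mul_lt_mul_of_pos_left hA2 (by linarith)
        linarith
      · have h1 : (1:ℝ) ≤ (l3:ℝ) := by exact_mod_cast Nat.one_le_iff_ne_zero.mpr h
        have S : (l3:ℝ) * contactAngle 1 r s < l3 * (Real.pi/2) :=
          mul_lt_mul_of_pos_left hA3 (by linarith)
        linarith
      · have h1 : (1:ℝ) ≤ (l5:ℝ) := by exact_mod_cast Nat.one_le_iff_ne_zero.mpr h
        have S : (l5:ℝ) * contactAngle r r s < l5 * (Real.pi/3) :=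
          mul_lt_mul_of_pos_left hA5 (by linarith)
        linarith
      · have h1 : (1:ℝ) ≤ (l6:ℝ) := by exact_mod_cast Nat.one_le_iff_ne_zero.mpr h
        have S : (l6:ℝ) * contactAngle s r s < l6 * (Real.pi/3) :=
          mul_lt_mul_of_pos_left hA6 (by linarith)
        linarith
    have h6 : Real.pi/3 * 6 < Real.pi/3 * (3*(l1:ℝ) + (3/2)*l2 + (3/2)*l3 + l4 + l5 + l6) := by
      linarith
    exact (mul_lt_mul_iff_right₀ (by positivity)).mp h6
end
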